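/- Let c < 0, g > 0, ε ∈ {−1, 1}, set φ₂* = (c + √(c² + 3g))/2, and let b be a constant with φ₂* < b < φ₀^+. Let I be an open interval containing 0 and let φ : I → ℝ be differentiable with φ(0) = b such that for every ξ ∈ I: φ₂* < φ(ξ) < φ₀^+, φ(ξ)² + m₁φ(ξ) + m₂ > 0, 2√(φ(ξ)² + m₁φ(ξ) + m₂) + 2φ(ξ) + m₁ > 0, 2√(a₂)·√(φ(ξ)² + m₁φ(ξ) + m₂) + b₂φ(ξ) + m₃ > 0, and φ′(ξ) = ε·(φ(ξ) − φ₀^+)·√(φ(ξ)² + m₁φ(ξ) + m₂)/(2φ(ξ)). Then β₂(φ(ξ)) = β₂(b)·exp(εξ/2) for all ξ ∈ I. (The case ε = −1 is the kink-like wave solution φ₃ of equation (3.5), and ε = 1 is the antikink-like wave solution φ₄ of equation (3.6).) -/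

import Mathlib

/-!
Where the numerator and denominator of `β₂` are positive, `β₂ = exp L` with
`L x = log(2√Q + 2x + m₁) + α₂ log(φ₀⁺ - x) - α₂ log(2√a₂ √Q + b₂ x + m₃)`, `Q = x² + m₁x + m₂`.
The first logarithm has derivative `1/√Q`, and a polynomial identity in `√Q`, `√a₂` and `√(c² + 4g)`
shows that the last one has derivative `(√a₂ - √Q)/((φ₀⁺ - x)√Q)`. Since `α₂ √a₂ = φ₀⁺`,
this gives `L' x = x / ((x - φ₀⁺) √Q)`, and on the orbit `φ' = ε (φ - φ₀⁺) √Q / (2φ)`, so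
`L ∘ φ` has constant derivative `ε/2` on the interval `I`. Hence `L (φ ξ) = L b + ε ξ / 2`.
-/

open Real

theorem Convex.eq_add_mul_sub_of_hasDerivAt {I : Set ℝ} (hI : Convex ℝ I) {f : ℝ → ℝ} {k : ℝ}
    (hf : ∀ x ∈ I, HasDerivAt f k x) {x y : ℝ} (hx : x ∈ I) (hy : y ∈ I) :
    f y = f x + k * (y - x) := by
  have hderiv : ∀ t ∈ I, HasDerivWithinAt (fun u => f u - k * u) 0 I t := fun t ht =>
    ((hf t ht).sub ((hasDerivAt_id t).const_mul k)).hasDerivWithinAt.congr_deriv (by simp)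
  have hle := hI.norm_image_sub_le_of_norm_hasDerivWithin_le hderiv (C := 0) (fun _ _ => by simp)
    hx hy
  have : f y - k * y - (f x - k * x) = 0 := by simpa using hle
  linarith

theorem add_sqrt_sq_add_pos (c : ℝ) {t : ℝ} (ht : 0 < t) : 0 < c + √(c ^ 2 + t) := by
  have : |c| < √(c ^ 2 + t) := by
    rw [← sqrt_sq_eq_abs]
    exact sqrt_lt_sqrt (sq_nonneg c) (by linarith)
  linarith [neg_abs_le c]

theorem hasDerivAt_sqrt_quadratic {p q x : ℝ} (hQ : 0 < x ^ 2 + p * x + q) :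
    HasDerivAt (fun x => √(x ^ 2 + p * x + q)) ((2 * x + p) / (2 * √(x ^ 2 + p * x + q))) x := by
  have hQ' : HasDerivAt (fun x => x ^ 2 + p * x + q) (2 * x + p) x := by
    simpa using (((hasDerivAt_pow 2 x).add ((hasDerivAt_id x).const_mul p)).add_const q)
  exact hQ'.sqrt hQ.ne'

theorem hasDerivAt_log_two_sqrt_quadratic_add {p q x : ℝ} (hQ : 0 < x ^ 2 + p * x + q)
    (hpos : 0 < 2 * √(x ^ 2 + p * x + q) + 2 * x + p) :
    HasDerivAt (fun x => log (2 * √(x ^ 2 + p * x + q) + 2 * x + p))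
      (1 / √(x ^ 2 + p * x + q)) x := by
  have hS : 0 < √(x ^ 2 + p * x + q) := sqrt_pos.mpr hQ
  refine ((((hasDerivAt_sqrt_quadratic hQ).const_mul 2).add
    ((hasDerivAt_id x).const_mul 2)).add_const p).log hpos.ne' |>.congr_deriv ?_
  simp only [Pi.add_apply, id]
  generalize √(x ^ 2 + p * x + q) = S at hS hpos ⊢
  rw [div_eq_div_iff hpos.ne' hS.ne']
  field_simp
  ring

namespace OsmosisK22

noncomputable section

variable (c g : ℝ)

-- `s` is the paper's `√` and `φ₀` its `φ₀^+`.
def s : ℝ := √(c ^ 2 + 4 * g)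

def φ₀ : ℝ := (c + s c g) / 2

def m₁ : ℝ := -(c - 3 * s c g) / 3

def m₂ : ℝ := (c ^ 2 + 6 * g + c * s c g) / 6

def m₃ : ℝ := (2 / 3) * (c ^ 2 + 6 * g + c * s c g)

def a₂ : ℝ := c ^ 2 + 4 * g + c * s c g

def b₂ : ℝ := (2 * c + 6 * s c g) / 3

def α₂ : ℝ := (c + s c g) / (2 * √(a₂ c g))

def quad (x : ℝ) : ℝ := x ^ 2 + m₁ c g * x + m₂ c g

def num (x : ℝ) : ℝ := 2 * √(quad c g x) + 2 * x + m₁ c g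

def den (x : ℝ) : ℝ := 2 * √(a₂ c g) * √(quad c g x) + b₂ c g * x + m₃ c g

def β₂ (x : ℝ) : ℝ := num c g x * (φ₀ c g - x) ^ α₂ c g / den c g x ^ α₂ c g

def logβ₂ (x : ℝ) : ℝ :=
  log (num c g x) + α₂ c g * log (φ₀ c g - x) - α₂ c g * log (den c g x)

variable {g}

theorem c_add_s_pos (hg : 0 < g) : 0 < c + s c g :=
  add_sqrt_sq_add_pos c (by positivity)

theorem a₂_pos (hg : 0 < g) : 0 < a₂ c g := by
  have hs : 0 < s c g := sqrt_pos.mpr (by positivity)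
  have : a₂ c g = s c g * (c + s c g) := by
    rw [a₂, mul_add, ← sq, s, sq_sqrt (by positivity)]; ring
  rw [this]
  exact mul_pos hs (c_add_s_pos c hg)

variable {c}

theorem β₂_eq_exp_logβ₂ {x : ℝ} (hnum : 0 < num c g x) (hx : x < φ₀ c g)
    (hden : 0 < den c g x) : β₂ c g x = exp (logβ₂ c g x) := by
  rw [β₂, logβ₂, rpow_def_of_pos (sub_pos.mpr hx), rpow_def_of_pos hden, exp_sub, exp_add,
    exp_log hnum, mul_comm (α₂ c g), mul_comm (α₂ c g)]

theorem hasDerivAt_log_den (hg : 0 < g) {x : ℝ} (hQ : 0 < quad c g x) (hx : x < φ₀ c g)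
    (hden : 0 < den c g x) :
    HasDerivAt (fun x => log (den c g x))
      ((√(a₂ c g) - √(quad c g x)) / ((φ₀ c g - x) * √(quad c g x))) x := by
  have hS : 0 < √(quad c g x) := sqrt_pos.mpr hQ
  have hS2 := sq_sqrt hQ.le
  have hA2 := sq_sqrt (a₂_pos c hg).le
  have hs2 : s c g ^ 2 = c ^ 2 + 4 * g := sq_sqrt (by positivity)
  refine ((((hasDerivAt_sqrt_quadratic hQ).const_mul (2 * √(a₂ c g))).add
    ((hasDerivAt_id x).const_mul (b₂ c g))).add_const (m₃ c g)).log hden.ne' |>.congr_deriv ?_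
  simp only [Pi.add_apply, id, den, quad] at hden hS hS2 ⊢
  rw [div_eq_div_iff hden.ne' (mul_pos (sub_pos.mpr hx) hS).ne']
  generalize √(x ^ 2 + m₁ c g * x + m₂ c g) = S at hS hS2 hden ⊢
  generalize √(a₂ c g) = A at hA2 hden ⊢
  rw [a₂, m₁, m₂, m₃, b₂, φ₀] at *
  field_simp
  linear_combination 12 * A * hS2 - 12 * S * hA2 + (3 * A + 6 * S) * hs2

theorem hasDerivAt_logβ₂ (hg : 0 < g) {x : ℝ} (hQ : 0 < quad c g x) (hnum : 0 < num c g x)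
    (hx : x < φ₀ c g) (hden : 0 < den c g x) :
    HasDerivAt (logβ₂ c g) (x / ((x - φ₀ c g) * √(quad c g x))) x := by
  have hA : 0 < √(a₂ c g) := sqrt_pos.mpr (a₂_pos c hg)
  have hαA : α₂ c g * √(a₂ c g) = φ₀ c g := by
    rw [α₂, φ₀]; field_simp
  have hlog_sub : HasDerivAt (fun x => log (φ₀ c g - x)) (-1 / (φ₀ c g - x)) x := by
    simpa using ((hasDerivAt_id x).const_sub (φ₀ c g)).log (sub_pos.mpr hx).ne'
  have hlog_num : HasDerivAt (fun x => log (num c g x)) (1 / √(quad c g x)) x :=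
    hasDerivAt_log_two_sqrt_quadratic_add hQ hnum
  refine (hlog_num.add (hlog_sub.const_mul _)).sub
    ((hasDerivAt_log_den hg hQ hx hden).const_mul _) |>.congr_deriv ?_
  have hφx : φ₀ c g - x ≠ 0 := (sub_pos.mpr hx).ne'
  have hxφ : x - φ₀ c g ≠ 0 := (sub_neg.mpr hx).ne
  field_simp
  linear_combination (φ₀ c g - x) * hαA

theorem hasDerivAt_logβ₂_comp (hg : 0 < g) {φ : ℝ → ℝ} {ε ξ : ℝ}
    (hφ : HasDerivAt φ (ε * (φ ξ - φ₀ c g) * √(quad c g (φ ξ)) / (2 * φ ξ)) ξ)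
    (hφ0 : φ ξ ≠ 0) (hQ : 0 < quad c g (φ ξ)) (hnum : 0 < num c g (φ ξ))
    (hlt : φ ξ < φ₀ c g) (hden : 0 < den c g (φ ξ)) :
    HasDerivAt (fun t => logβ₂ c g (φ t)) (ε / 2) ξ := by
  refine (hasDerivAt_logβ₂ hg hQ hnum hlt hden).comp ξ hφ |>.congr_deriv ?_
  have hS : 0 < √(quad c g (φ ξ)) := sqrt_pos.mpr hQ
  have hsub : φ ξ - φ₀ c g ≠ 0 := (sub_neg.mpr hlt).ne
  field_simp

end

end OsmosisK22

theorem osmosis_K22_kink_like_c_neg_g_pos_plus_general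
    (c g : ℝ) (hg : 0 < g)
    (ε : ℝ)
    (s φ0p m1 m2 m3 a2 b2 α2 φ2s : ℝ)
    (hs : s = Real.sqrt (c ^ 2 + 4 * g))
    (hφ0p : φ0p = (c + s) / 2)
    (hm1 : m1 = -(c - 3 * s) / 3)
    (hm2 : m2 = (c ^ 2 + 6 * g + c * s) / 6)
    (hm3 : m3 = (2 / 3) * (c ^ 2 + 6 * g + c * s))
    (ha2 : a2 = c ^ 2 + 4 * g + c * s)
    (hb2 : b2 = (2 * c + 6 * s) / 3)
    (hα2 : α2 = (c + s) / (2 * Real.sqrt a2))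
    (hφ2s : φ2s = (c + Real.sqrt (c ^ 2 + 3 * g)) / 2)
    (β₂ : ℝ → ℝ)
    (hβ₂ : ∀ x : ℝ, β₂ x =
      (2 * Real.sqrt (x ^ 2 + m1 * x + m2) + 2 * x + m1) * (φ0p - x) ^ α2 /
        (2 * Real.sqrt a2 * Real.sqrt (x ^ 2 + m1 * x + m2) + b2 * x + m3) ^ α2)
    (b : ℝ)
    (I : Set ℝ) (hIconv : Convex ℝ I) (h0I : (0:ℝ) ∈ I)
    (φ : ℝ → ℝ) (hφ0 : φ 0 = b)
    (hrange : ∀ ξ ∈ I, φ2s < φ ξ ∧ φ ξ < φ0p)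
    (hq : ∀ ξ ∈ I, 0 < (φ ξ) ^ 2 + m1 * φ ξ + m2)
    (hnum : ∀ ξ ∈ I, 0 < 2 * Real.sqrt ((φ ξ) ^ 2 + m1 * φ ξ + m2) + 2 * φ ξ + m1)
    (hden : ∀ ξ ∈ I,
      0 < 2 * Real.sqrt a2 * Real.sqrt ((φ ξ) ^ 2 + m1 * φ ξ + m2) + b2 * φ ξ + m3)
    (horb : ∀ ξ ∈ I, HasDerivAt φ
      (ε * (φ ξ - φ0p) * Real.sqrt ((φ ξ) ^ 2 + m1 * φ ξ + m2) / (2 * φ ξ)) ξ) :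
    ∀ ξ ∈ I, β₂ (φ ξ) = β₂ b * Real.exp (ε * ξ / 2) := by
  obtain rfl : s = OsmosisK22.s c g := hs
  obtain rfl : φ0p = OsmosisK22.φ₀ c g := hφ0p
  obtain rfl : m1 = OsmosisK22.m₁ c g := hm1
  obtain rfl : m2 = OsmosisK22.m₂ c g := hm2
  obtain rfl : m3 = OsmosisK22.m₃ c g := hm3
  obtain rfl : a2 = OsmosisK22.a₂ c g := ha2
  obtain rfl : b2 = OsmosisK22.b₂ c g := hb2
  obtain rfl : α2 = OsmosisK22.α₂ c g := hα2
  have hφ_pos : ∀ ξ ∈ I, 0 < φ ξ := fun ξ hξ =>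
    lt_trans (by rw [hφ2s]; exact half_pos (add_sqrt_sq_add_pos c (by positivity)))
      (hrange ξ hξ).1
  have hβ_exp : ∀ ξ ∈ I, β₂ (φ ξ) = exp (OsmosisK22.logβ₂ c g (φ ξ)) := fun ξ hξ =>
    (hβ₂ _).trans (OsmosisK22.β₂_eq_exp_logβ₂ (hnum ξ hξ) (hrange ξ hξ).2 (hden ξ hξ))
  have hlog : ∀ ξ ∈ I, HasDerivAt (fun t => OsmosisK22.logβ₂ c g (φ t)) (ε / 2) ξ :=
    fun ξ hξ => OsmosisK22.hasDerivAt_logβ₂_comp hg (horb ξ hξ) (hφ_pos ξ hξ).ne' (hq ξ hξ)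
      (hnum ξ hξ) (hrange ξ hξ).2 (hden ξ hξ)
  intro ξ hξ
  rw [hβ_exp ξ hξ, ← hφ0, hβ_exp 0 h0I, hIconv.eq_add_mul_sub_of_hasDerivAt hlog h0I hξ,
    exp_add]
  congr 2
  ring

/-- kink-like (ε = −1, eq. (3.5)) and antikink-like (ε = 1, eq. (3.6))
wave solutions of the osmosis K(2,2) equation for `c < 0`, `g > 0`:
a solution of the orbit equation through `b ∈ (φ₂*, φ₀^+)`, where
`φ₂* = (c + √(c²+3g))/2`, satisfies `β₂(φ(ξ)) = β₂(b)·exp(εξ/2)`. -/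
theorem osmosis_K22_kink_like_c_neg_g_pos_plus
    (c g : ℝ) (hc : c < 0) (hg : 0 < g)
    (ε : ℝ) (hε : ε = -1 ∨ ε = 1)
    (s φ0p m1 m2 m3 a2 b2 α2 φ2s : ℝ)
    (hs : s = Real.sqrt (c ^ 2 + 4 * g))
    (hφ0p : φ0p = (c + s) / 2)
    (hm1 : m1 = -(c - 3 * s) / 3)
    (hm2 : m2 = (c ^ 2 + 6 * g + c * s) / 6)
    (hm3 : m3 = (2 / 3) * (c ^ 2 + 6 * g + c * s))
    (ha2 : a2 = c ^ 2 + 4 * g + c * s)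
    (hb2 : b2 = (2 * c + 6 * s) / 3)
    (hα2 : α2 = (c + s) / (2 * Real.sqrt a2))
    (hφ2s : φ2s = (c + Real.sqrt (c ^ 2 + 3 * g)) / 2)
    (β₂ : ℝ → ℝ)
    (hβ₂ : ∀ x : ℝ, β₂ x =
      (2 * Real.sqrt (x ^ 2 + m1 * x + m2) + 2 * x + m1) * (φ0p - x) ^ α2 /
        (2 * Real.sqrt a2 * Real.sqrt (x ^ 2 + m1 * x + m2) + b2 * x + m3) ^ α2)
    (b : ℝ) (hb : φ2s < b ∧ b < φ0p)
    (I : Set ℝ) (hI : IsOpen I) (hIconv : Convex ℝ I) (h0I : (0:ℝ) ∈ I)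
    (φ : ℝ → ℝ) (hφ0 : φ 0 = b)
    (hrange : ∀ ξ ∈ I, φ2s < φ ξ ∧ φ ξ < φ0p)
    (hq : ∀ ξ ∈ I, 0 < (φ ξ) ^ 2 + m1 * φ ξ + m2)
    (hnum : ∀ ξ ∈ I, 0 < 2 * Real.sqrt ((φ ξ) ^ 2 + m1 * φ ξ + m2) + 2 * φ ξ + m1)
    (hden : ∀ ξ ∈ I,
      0 < 2 * Real.sqrt a2 * Real.sqrt ((φ ξ) ^ 2 + m1 * φ ξ + m2) + b2 * φ ξ + m3)
    (horb : ∀ ξ ∈ I, HasDerivAt φ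
      (ε * (φ ξ - φ0p) * Real.sqrt ((φ ξ) ^ 2 + m1 * φ ξ + m2) / (2 * φ ξ)) ξ) :
    ∀ ξ ∈ I, β₂ (φ ξ) = β₂ b * Real.exp (ε * ξ / 2) :=
  osmosis_K22_kink_like_c_neg_g_pos_plus_general c g hg ε s φ0p m1 m2 m3 a2 b2 α2 φ2s hs hφ0p hm1
    hm2 hm3 ha2 hb2 hα2 hφ2s β₂ hβ₂ b I hIconv h0I φ hφ0 hrange hq hnum hden horb
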